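/- Let π_1 be the endomorphism of series defined by π_1(S) = Σ_{k≥1} ((-1)^{k-1}/k) Σ_{u_1,...,u_k ∈ Y^+} ⟨S, u_1 ⧢_φ ⋯ ⧢_φ u_k⟩ u_1⋯u_k. Then π_1 is a projector (π_1 ∘ π_1 = π_1) whose image is exactly the space of primitive series Prim(K⟨⟨Y⟩⟩). -/

import Mathlib

noncomputable section

open Finsupp

variable {K : Type*} [CommRing K] [Algebra ℚ K]
variable {Y : Type*} [DecidableEq Y]

/-- The word `w ∈ Y*` viewed as a basis element of `K⟨Y⟩`. -/
def word (w : List Y) : List Y →₀ K := Finsupp.single w 1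

/-- Left concatenation by a letter, as a linear endomorphism of `K⟨Y⟩`. -/
def consL (a : Y) : (List Y →₀ K) →ₗ[K] (List Y →₀ K) :=
  Finsupp.lmapDomain K K (List.cons a)

/-- `m` is the `φ`-deformed shuffle product: it satisfies the initialization
`1 ⧢ w = w ⧢ 1 = w` and the recursion
`(au) ⧢ (bv) = a (u ⧢ bv) + b (au ⧢ v) + φ(a,b)(u ⧢ v)`. -/
def IsPhiShuffle (φ : Y → Y → (Y →₀ K))
    (m : (List Y →₀ K) →ₗ[K] (List Y →₀ K) →ₗ[K] (List Y →₀ K)) : Prop :=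
  (∀ w : List Y, m (word []) (word w) = word w) ∧
  (∀ w : List Y, m (word w) (word []) = word w) ∧
  ∀ (a b : Y) (u v : List Y),
    m (word (a :: u)) (word (b :: v)) =
      consL a (m (word u) (word (b :: v))) + consL b (m (word (a :: u)) (word v)) +
      (φ a b).sum fun c k => k • consL c (m (word u) (word v))

/-- Bilinear extension of `φ` to `KY`. -/
def phiExt (φ : Y → Y → (Y →₀ K)) (p q : Y →₀ K) : Y →₀ K :=
  p.sum fun a ka => q.sum fun b kb => (ka * kb) • φ a b

/-- The extension of `φ` to `KY ⊗ KY → KY` is associative. -/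
def PhiAssoc (φ : Y → Y → (Y →₀ K)) : Prop :=
  ∀ a b c : Y, phiExt φ (φ a b) (Finsupp.single c 1) = phiExt φ (Finsupp.single a 1) (φ b c)

/-- The extension of `φ` is commutative. -/
def PhiComm (φ : Y → Y → (Y →₀ K)) : Prop := ∀ a b : Y, φ a b = φ b a

/-- `φ` is dualizable: for every letter `z` only finitely many pairs of letters
have `z` in the support of their `φ`-product. -/
def PhiDualizable (φ : Y → Y → (Y →₀ K)) : Prop :=
  ∀ z : Y, {p : Y × Y | φ p.1 p.2 z ≠ 0}.Finite

/-- Extension of an associative `φ` to nonempty words: `φ(xw) = φ(x, φ(w))`. -/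
def phiWord (φ : Y → Y → (Y →₀ K)) : List Y → (Y →₀ K)
  | [] => 0
  | [x] => Finsupp.single x 1
  | x :: y :: w => (phiWord φ (y :: w)).sum fun b k => k • φ x b

/-- `φ` is moderate: for every letter `y`, only finitely many nonempty words `w`
satisfy `⟨y, φ(w)⟩ ≠ 0`. -/
def PhiModerate (φ : Y → Y → (Y →₀ K)) : Prop :=
  ∀ y : Y, {w : List Y | w ≠ [] ∧ phiWord φ w y ≠ 0}.Finite

/-- Pairing of two polynomials (the words form an orthonormal basis). -/
def pairPP (p q : List Y →₀ K) : K := p.sum fun w a => a * q w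

/-- Pairing `⟨S, p⟩` of a series with a polynomial. -/
def pairPS (S : List Y → K) (p : List Y →₀ K) : K := p.sum fun w a => a * S w

/-- Concatenation product on `K⟨Y⟩`. -/
def concP (p q : List Y →₀ K) : List Y →₀ K :=
  p.sum fun u a => q.sum fun v b => Finsupp.single (u ++ v) (a * b)

/-- Concatenation powers. -/
def concPow (p : List Y →₀ K) : ℕ → (List Y →₀ K)
  | 0 => word []
  | n + 1 => concP p (concPow p n)

/-- Powers with respect to a bilinear product `m`. -/
def mpow (m : (List Y →₀ K) →ₗ[K] (List Y →₀ K) →ₗ[K] (List Y →₀ K))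
    (p : List Y →₀ K) : ℕ → (List Y →₀ K)
  | 0 => word []
  | n + 1 => m p (mpow m p n)

/-- `m`-product of a list of polynomials. -/
def prodM (m : (List Y →₀ K) →ₗ[K] (List Y →₀ K) →ₗ[K] (List Y →₀ K))
    (L : List (List Y →₀ K)) : List Y →₀ K :=
  L.foldr (fun p acc => m p acc) (word [])

/-- The unit series. -/
def oneS : List Y → K := fun w => if w = [] then 1 else 0

/-- Concatenation (Cauchy) product of series. -/
def mulS (S T : List Y → K) : List Y → K := fun w =>
  ∑ i ∈ Finset.range (w.length + 1), S (w.take i) * T (w.drop i)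

/-- Concatenation powers of a series. -/
def powS (S : List Y → K) : ℕ → (List Y → K)
  | 0 => oneS
  | n + 1 => mulS S (powS S n)

/-- Concatenation product of a list of series. -/
def prodS (L : List (List Y → K)) : List Y → K := L.foldr (fun S acc => mulS S acc) oneS

/-- The coproduct `Δ_{⧢_φ}` dual to `m`, on series: `Δ(S)(u,v) = ⟨S, u ⧢_φ v⟩`. -/
def DeltaS (m : (List Y →₀ K) →ₗ[K] (List Y →₀ K) →ₗ[K] (List Y →₀ K))
    (S : List Y → K) : List Y × List Y → K :=
  fun p => pairPS S (m (word p.1) (word p.2))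

/-- `S` is primitive: `Δ_{⧢_φ}(S) = S ⊗ 1 + 1 ⊗ S`. -/
def PrimS (m : (List Y →₀ K) →ₗ[K] (List Y →₀ K) →ₗ[K] (List Y →₀ K))
    (S : List Y → K) : Prop :=
  ∀ u v : List Y, DeltaS m S (u, v) =
    (if v = [] then S u else 0) + (if u = [] then S v else 0)

/-- `S` is group-like: `⟨S,1⟩ = 1` and `Δ_{⧢_φ}(S) = S ⊗ S`. -/
def GroupLikeS (m : (List Y →₀ K) →ₗ[K] (List Y →₀ K) →ₗ[K] (List Y →₀ K))
    (S : List Y → K) : Prop :=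
  S [] = 1 ∧ ∀ u v : List Y, DeltaS m S (u, v) = S u * S v

/-- `Δfn` is the (finitely supported) dual coproduct witnessing dualizability of `m`:
`⟨u ⧢_φ v, w⟩ = ⟨u ⊗ v, Δ(w)⟩`. -/
def IsDualWitness (m : (List Y →₀ K) →ₗ[K] (List Y →₀ K) →ₗ[K] (List Y →₀ K))
    (Δfn : List Y → (List Y × List Y →₀ K)) : Prop :=
  ∀ u v w : List Y, (m (word u) (word v)) w = Δfn w (u, v)

/-- All factorizations of a word into nonempty blocks. -/
def cuts : List Y → List (List (List Y))
  | [] => [[]]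
  | a :: w =>
    (cuts w).flatMap fun parts =>
      match parts with
      | [] => [[[a]]]
      | p :: ps => [[a] :: p :: ps, (a :: p) :: ps]

/-- The extended Eulerian projector `π₁` on series:
`π₁(S) = Σ_{k≥1} ((-1)^{k-1}/k) Σ_{u_1⋯u_k = w, u_i ∈ Y⁺} ⟨S, u_1 ⧢_φ ⋯ ⧢_φ u_k⟩ w`. -/
def piOneS (m : (List Y →₀ K) →ₗ[K] (List Y →₀ K) →ₗ[K] (List Y →₀ K))
    (S : List Y → K) : List Y → K := fun w =>
  ((cuts w).map fun parts =>
    algebraMap ℚ K ((-1) ^ (parts.length - 1) / (parts.length : ℚ)) *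
      pairPS S (prodM m (parts.map word))).sum

/-- Logarithm of a series `S` with `⟨S,1⟩ = 1`. -/
def logS (S : List Y → K) : List Y → K := fun w =>
  ∑ n ∈ Finset.Icc 1 w.length,
    algebraMap ℚ K ((-1) ^ (n - 1) / (n : ℚ)) * powS (fun t => S t - oneS t) n w

/-- Convolution of endomorphisms (valued in series), using a dual coproduct witness. -/
def convT (Δfn : List Y → (List Y × List Y →₀ K))
    (f g : (List Y →₀ K) → (List Y → K)) : (List Y →₀ K) → (List Y → K) :=
  fun P w => P.sum fun t a =>
    a * (Δfn t).sum fun p c => c * mulS (f (word p.1)) (g (word p.2)) w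

/-- The convolution unit `e = 1 ∘ ε`. -/
def eT : (List Y →₀ K) → (List Y → K) := fun P w => if w = [] then P [] else 0

/-- Convolution powers `π₁^{⋆ n}` of the Eulerian projector. -/
def convPowPi (m : (List Y →₀ K) →ₗ[K] (List Y →₀ K) →ₗ[K] (List Y →₀ K))
    (Δfn : List Y → (List Y × List Y →₀ K)) : ℕ → ((List Y →₀ K) → (List Y → K))
  | 0 => eT
  | n + 1 => convT Δfn (fun P => piOneS m fun t => P t) (convPowPi m Δfn n)

/-- Lyndon words: nonempty and lexicographically smaller than each proper suffix. -/
def IsLyndon [LinearOrder Y] (w : List Y) : Prop :=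
  w ≠ [] ∧ ∀ u v : List Y, u ≠ [] → v ≠ [] → w = u ++ v → List.Lex (· < ·) w v

/-- Strictly decreasing lists of Lyndon words with positive exponents,
indexing monomials in Lyndon words. -/
abbrev DecLyn (Y : Type*) [LinearOrder Y] :=
  {s : List (List Y × ℕ) // (∀ p ∈ s, IsLyndon p.1 ∧ 0 < p.2) ∧
    s.Chain' fun a b => List.Lex (· < ·) b.1 a.1}

/-- `⧢_φ`-monomial `l₁^{⧢ i₁} ⧢ ⋯ ⧢ l_k^{⧢ i_k}`. -/
def shMonomial (m : (List Y →₀ K) →ₗ[K] (List Y →₀ K) →ₗ[K] (List Y →₀ K))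
    (s : List (List Y × ℕ)) : List Y →₀ K :=
  s.foldr (fun p acc => m (mpow m (word p.1) p.2) acc) (word [])

/-- Concatenation monomial `Π_{l₁}^{i₁} ⋯ Π_{l_k}^{i_k}` in a family `Pi`. -/
def concMonomial (Pi : List Y → (List Y →₀ K)) (s : List (List Y × ℕ)) : List Y →₀ K :=
  s.foldr (fun p acc => concP (concPow (Pi p.1) p.2) acc) (word [])

/-- The singleton index `l¹ ∈ DecLyn Y` attached to a Lyndon word. -/
def singleIdx [LinearOrder Y] (l : List Y) (hl : IsLyndon l) : DecLyn Y :=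
  ⟨[(l, 1)], ⟨fun p hp => by
      rw [List.mem_singleton] at hp; subst hp; exact ⟨hl, Nat.one_pos⟩,
    List.isChain_singleton _⟩⟩

/-- `(s, r)` is the standard factorization of the Lyndon word `l`:
`l = sr` with `s, r` nonempty and `r` the lexicographically least proper suffix. -/
def StdFact [LinearOrder Y] (l s r : List Y) : Prop :=
  l = s ++ r ∧ s ≠ [] ∧ r ≠ [] ∧
  ∀ s' r' : List Y, l = s' ++ r' → s' ≠ [] → r' ≠ [] → r = r' ∨ List.Lex (· < ·) r r'

/-- `Pi` is the family defined by `Π_y = π₁(y)` on letters and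
`Π_l = [Π_s, Π_r]` for the standard factorization `(s,r)` of a Lyndon word `l`. -/
def IsPiFamily [LinearOrder Y]
    (m : (List Y →₀ K) →ₗ[K] (List Y →₀ K) →ₗ[K] (List Y →₀ K))
    (Pi : List Y → (List Y →₀ K)) : Prop :=
  (∀ y : Y, ∀ w : List Y, Pi [y] w = piOneS m (fun t => (word [y] : List Y →₀ K) t) w) ∧
  ∀ l s r : List Y, IsLyndon l → StdFact l s r →
    Pi l = concP (Pi s) (Pi r) - concP (Pi r) (Pi s)

end

/-!
Dually, `π₁(S) = S ∘ π̌` for the truncated logarithm `π̌ = ∑_k ((-1)^(k-1)/k) (id - ε)^{⋆k}` of the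
identity for the convolution `f ⋆ g = ⧢_φ ∘ (f ⊗ g) ∘ Δ`, `Δ` the deconcatenation. The recursion
defining `⧢_φ` makes `Δ` multiplicative; with associativity and commutativity of `⧢_φ` this gives
`(id - ε)^{⋆k} (u ⧢_φ v) = ∑_{i,j} [xⁱyʲ] (x + y + xy)^k · (id - ε)^{⋆i} u ⧢_φ (id - ε)^{⋆j} v`.
So `π̌ (u ⧢_φ v)` only sees the coefficients of `log (1 + x + y + xy) = log (1 + x) + log (1 + y)`,
which has no mixed monomials: `π̌` kills `u ⧢_φ v` for `u, v ≠ 1`, i.e. `π₁(S)` is primitive.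
A primitive `S` kills `u ⧢_φ p` for `u ≠ 1` and `p` without constant term, so only the term `k = 1`
of `π₁(S)` survives, and it is `S`. Idempotence follows.
-/

noncomputable section

section Words

variable {K : Type*} [CommRing K] {Y : Type*}

lemma single_eq_smul_word (w : List Y) (k : K) : Finsupp.single w k = k • word w := by
  simp [word, Finsupp.smul_single]

lemma consL_word (a : Y) (w : List Y) : consL a (word w : List Y →₀ K) = word (a :: w) := by
  simp [consL, word, Finsupp.mapDomain_single]

lemma consL_apply_nil (a : Y) (p : List Y →₀ K) : consL a p [] = 0 :=
  Finsupp.mapDomain_of_notMem_range _ _ (by rintro ⟨x, ⟨⟩⟩)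

def prepend : (Y →₀ K) →ₗ[K] (List Y →₀ K) →ₗ[K] (List Y →₀ K) :=
  Finsupp.linearCombination K consL

lemma prepend_apply (ψ : Y →₀ K) (W : List Y →₀ K) :
    prepend ψ W = ψ.sum fun c k => k • consL c W := by
  simp [prepend, Finsupp.linearCombination_apply, LinearMap.finsupp_sum_apply]

lemma pairPS_eq_linearCombination (S : List Y → K) :
    pairPS S = Finsupp.linearCombination K S := by
  ext p; rfl

lemma phiExt_single_single (φ : Y → Y → (Y →₀ K)) (a b : Y) (x y : K) :
    phiExt φ (Finsupp.single a x) (Finsupp.single b y) = (x * y) • φ a b := by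
  simp [phiExt]

lemma phiExt_add_left (φ : Y → Y → (Y →₀ K)) (p q r : Y →₀ K) :
    phiExt φ (p + q) r = phiExt φ p r + phiExt φ q r :=
  Finsupp.sum_add_index' (by simp) fun a x y => by
    simp only [Finsupp.sum, ← Finset.sum_add_distrib, add_mul, add_smul]

lemma phiExt_add_right (φ : Y → Y → (Y →₀ K)) (p q r : Y →₀ K) :
    phiExt φ p (q + r) = phiExt φ p q + phiExt φ p r := by
  simp only [phiExt, ← Finsupp.sum_add]
  refine Finsupp.sum_congr fun a _ => Finsupp.sum_add_index' (by simp) fun b x y => ?_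
  rw [mul_add, add_smul]

end Words

namespace IsPhiShuffle

variable {K : Type*} [CommRing K] {Y : Type*}
variable {φ : Y → Y → (Y →₀ K)} {m : (List Y →₀ K) →ₗ[K] (List Y →₀ K) →ₗ[K] (List Y →₀ K)}

lemma cons_cons (hm : IsPhiShuffle φ m) (a b : Y) (u v : List Y) :
    m (word (a :: u)) (word (b :: v)) =
      consL a (m (word u) (word (b :: v))) + consL b (m (word (a :: u)) (word v)) +
      prepend (φ a b) (m (word u) (word v)) := by
  rw [hm.2.2 a b u v, prepend_apply]

lemma nil_left (hm : IsPhiShuffle φ m) (p : List Y →₀ K) : m (word []) p = p := by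
  induction p using Finsupp.induction_linear with
  | zero => simp
  | add f g hf hg => rw [map_add, hf, hg]
  | single w k => rw [single_eq_smul_word, map_smul, hm.1]

lemma nil_right (hm : IsPhiShuffle φ m) (p : List Y →₀ K) : m p (word []) = p := by
  induction p using Finsupp.induction_linear with
  | zero => simp
  | add f g hf hg => rw [map_add, LinearMap.add_apply, hf, hg]
  | single w k => rw [single_eq_smul_word, map_smul, LinearMap.smul_apply, hm.2.1]

lemma cons_consL (hm : IsPhiShuffle φ m) (a b : Y) (u : List Y) (p : List Y →₀ K) :
    m (word (a :: u)) (consL b p) =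
      consL a (m (word u) (consL b p)) + consL b (m (word (a :: u)) p) +
      prepend (φ a b) (m (word u) p) := by
  induction p using Finsupp.induction_linear with
  | zero => simp
  | add f g hf hg => simp only [map_add, hf, hg]; abel
  | single w k =>
    simp only [single_eq_smul_word, map_smul, consL_word, hm.cons_cons, smul_add]

lemma consL_cons (hm : IsPhiShuffle φ m) (a b : Y) (p : List Y →₀ K) (v : List Y) :
    m (consL a p) (word (b :: v)) =
      consL a (m p (word (b :: v))) + consL b (m (consL a p) (word v)) +
      prepend (φ a b) (m p (word v)) := by
  induction p using Finsupp.induction_linear with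
  | zero => simp
  | add f g hf hg => simp only [map_add, LinearMap.add_apply, hf, hg]; abel
  | single w k =>
    simp only [single_eq_smul_word, map_smul, LinearMap.smul_apply, consL_word, hm.cons_cons,
      smul_add]

lemma comm_word (hm : IsPhiShuffle φ m) (hcomm : PhiComm φ) :
    ∀ u v : List Y, m (word u) (word v) = m (word v) (word u)
  | [], v => by rw [hm.1, hm.2.1]
  | a :: u, [] => by rw [hm.1, hm.2.1]
  | a :: u, b :: v => by
    rw [hm.cons_cons, hm.cons_cons, comm_word hm hcomm u (b :: v),
      comm_word hm hcomm (a :: u) v, comm_word hm hcomm u v, hcomm a b]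
    abel
termination_by u v => u.length + v.length

lemma comm (hm : IsPhiShuffle φ m) (hcomm : PhiComm φ) (p q : List Y →₀ K) : m p q = m q p := by
  induction p using Finsupp.induction_linear with
  | zero => simp
  | add f g hf hg => simp only [map_add, LinearMap.add_apply, hf, hg]
  | single w k =>
    induction q using Finsupp.induction_linear with
    | zero => simp
    | add f g hf hg => simp only [map_add, LinearMap.add_apply, hf, hg]
    | single w' k' =>
      simp only [single_eq_smul_word, map_smul, LinearMap.smul_apply, hm.comm_word hcomm w w',
        smul_comm k k']

lemma prepend_cons (hm : IsPhiShuffle φ m) (ψ : Y →₀ K) (Z : List Y →₀ K) (c : Y)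
    (w : List Y) :
    m (prepend ψ Z) (word (c :: w)) =
      prepend ψ (m Z (word (c :: w))) + consL c (m (prepend ψ Z) (word w)) +
      prepend (phiExt φ ψ (Finsupp.single c 1)) (m Z (word w)) := by
  induction ψ using Finsupp.induction_linear with
  | zero => simp [phiExt]
  | add f g hf hg =>
    simp only [map_add, LinearMap.add_apply, phiExt_add_left, hf, hg]; abel
  | single d k =>
    simp only [prepend_apply, Finsupp.sum_single_index, zero_smul, map_smul,
      LinearMap.smul_apply, hm.consL_cons, phiExt_single_single, mul_one, smul_add]

lemma cons_prepend (hm : IsPhiShuffle φ m) (a : Y) (u : List Y) (ψ : Y →₀ K)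
    (Z : List Y →₀ K) :
    m (word (a :: u)) (prepend ψ Z) =
      consL a (m (word u) (prepend ψ Z)) + prepend ψ (m (word (a :: u)) Z) +
      prepend (phiExt φ (Finsupp.single a 1) ψ) (m (word u) Z) := by
  induction ψ using Finsupp.induction_linear with
  | zero => simp [phiExt]
  | add f g hf hg =>
    simp only [map_add, LinearMap.add_apply, phiExt_add_right, hf, hg]; abel
  | single d k =>
    simp only [prepend_apply, Finsupp.sum_single_index, zero_smul, map_smul,
      LinearMap.smul_apply, hm.cons_consL, phiExt_single_single, one_mul, smul_add]

lemma assoc_word (hm : IsPhiShuffle φ m) (hassoc : PhiAssoc φ) :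
    ∀ u v w : List Y, m (m (word u) (word v)) (word w) = m (word u) (m (word v) (word w))
  | [], v, w => by rw [hm.nil_left, hm.nil_left]
  | a :: u, [], w => by rw [hm.nil_right, hm.nil_left]
  | a :: u, b :: v, [] => by rw [hm.nil_right, hm.nil_right]
  | a :: u, b :: v, c :: w => by
    rw [hm.cons_cons a b, hm.cons_cons b c]
    simp only [map_add, LinearMap.add_apply]
    rw [hm.consL_cons a c, hm.consL_cons b c, hm.prepend_cons, hm.cons_consL a b,
      hm.cons_consL a c, hm.cons_prepend, assoc_word hm hassoc u (b :: v) (c :: w),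
      assoc_word hm hassoc (a :: u) v (c :: w), assoc_word hm hassoc u v (c :: w),
      assoc_word hm hassoc u (b :: v) w, assoc_word hm hassoc (a :: u) v w,
      assoc_word hm hassoc u v w, hm.cons_cons b c, ← assoc_word hm hassoc (a :: u) (b :: v) w,
      hm.cons_cons a b, hassoc a b c]
    simp only [map_add, LinearMap.add_apply]
    abel
termination_by u v w => u.length + v.length + w.length

lemma assoc (hm : IsPhiShuffle φ m) (hassoc : PhiAssoc φ) (p q r : List Y →₀ K) :
    m (m p q) r = m p (m q r) := by
  induction p using Finsupp.induction_linear with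
  | zero => simp
  | add f g hf hg => simp only [map_add, LinearMap.add_apply, hf, hg]
  | single u k =>
    induction q using Finsupp.induction_linear with
    | zero => simp
    | add f g hf hg => simp only [map_add, LinearMap.add_apply, hf, hg]
    | single v k' =>
      induction r using Finsupp.induction_linear with
      | zero => simp
      | add f g hf hg => simp only [map_add, hf, hg]
      | single w k'' =>
        simp only [single_eq_smul_word, map_smul, LinearMap.smul_apply,
          hm.assoc_word hassoc u v w]

lemma mul_mul_mul_comm (hm : IsPhiShuffle φ m) (hassoc : PhiAssoc φ) (hcomm : PhiComm φ)
    (p q r s : List Y →₀ K) : m (m p q) (m r s) = m (m p r) (m q s) := by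
  rw [hm.assoc hassoc, hm.assoc hassoc, ← hm.assoc hassoc q, ← hm.assoc hassoc r,
    hm.comm hcomm q r]

lemma cons_apply_nil (hm : IsPhiShuffle φ m) (a : Y) (u : List Y) (p : List Y →₀ K) :
    m (word (a :: u)) p [] = 0 := by
  induction p using Finsupp.induction_linear with
  | zero => simp
  | add f g hf hg => simp [hf, hg]
  | single w k =>
    rw [single_eq_smul_word, map_smul, Finsupp.smul_apply]
    cases w with
    | nil => rw [hm.2.1]; simp [word]
    | cons b v => simp [hm.cons_cons, consL_apply_nil, prepend_apply, Finsupp.sum]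

end IsPhiShuffle

section Deconcat

variable {K : Type*} [CommRing K] {Y : Type*} {M : Type*} [AddCommMonoid M] [Module K M]

/-- `B ∘ Δ`, for the deconcatenation coproduct `Δ`. -/
def deconcat (B : (List Y →₀ K) →ₗ[K] (List Y →₀ K) →ₗ[K] M) : (List Y →₀ K) →ₗ[K] M :=
  Finsupp.linearCombination K fun w =>
    ∑ t ∈ Finset.range (w.length + 1), B (word (w.take t)) (word (w.drop t))

variable (B : (List Y →₀ K) →ₗ[K] (List Y →₀ K) →ₗ[K] M)

lemma deconcat_word (w : List Y) :
    deconcat B (word w) =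
      ∑ t ∈ Finset.range (w.length + 1), B (word (w.take t)) (word (w.drop t)) := by
  simp [deconcat, word]

lemma deconcat_consL (a : Y) (q : List Y →₀ K) :
    deconcat B (consL a q) = B (word []) (consL a q) + deconcat (B.comp (consL a)) q := by
  induction q using Finsupp.induction_linear with
  | zero => simp
  | add f g hf hg => simp only [map_add, hf, hg]; abel
  | single w k =>
    simp only [single_eq_smul_word, map_smul, consL_word, ← smul_add, deconcat_word,
      List.length_cons, Finset.sum_range_succ' _ (w.length + 1), List.take_succ_cons,
      List.drop_succ_cons, List.take_zero, List.drop_zero, LinearMap.comp_apply]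
    rw [add_comm]

lemma deconcat_add (B' : (List Y →₀ K) →ₗ[K] (List Y →₀ K) →ₗ[K] M) (p : List Y →₀ K) :
    deconcat (B + B') p = deconcat B p + deconcat B' p := by
  simp [deconcat, Finsupp.linearCombination_apply, Finset.sum_add_distrib, ← Finsupp.sum_add]

lemma deconcat_smul (k : K) (p : List Y →₀ K) : deconcat (k • B) p = k • deconcat B p := by
  simp [deconcat, Finsupp.linearCombination_apply, Finsupp.smul_sum, Finset.smul_sum,
    smul_comm k]

lemma deconcat_prepend (ψ : Y →₀ K) (Z : List Y →₀ K) :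
    deconcat B (prepend ψ Z) = B (word []) (prepend ψ Z) + deconcat (B.comp (prepend ψ)) Z := by
  induction ψ using Finsupp.induction_linear with
  | zero => simp [deconcat, Finsupp.linearCombination_apply]
  | add f g hf hg =>
    simp only [map_add, LinearMap.add_apply, LinearMap.comp_add, deconcat_add, hf, hg]; abel
  | single d k =>
    have : prepend (Finsupp.single d k) = k • consL (K := K) d := by simp [prepend]
    simp only [this, LinearMap.smul_apply, map_smul, LinearMap.comp_smul, deconcat_smul,
      deconcat_consL, smul_add]

end Deconcat

namespace IsPhiShuffle

variable {K : Type*} [CommRing K] {Y : Type*} {M : Type*} [AddCommMonoid M] [Module K M]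
variable {φ : Y → Y → (Y →₀ K)} {m : (List Y →₀ K) →ₗ[K] (List Y →₀ K) →ₗ[K] (List Y →₀ K)}

lemma deconcat_shuffle (hm : IsPhiShuffle φ m) :
    ∀ (u v : List Y) (B : (List Y →₀ K) →ₗ[K] (List Y →₀ K) →ₗ[K] M),
      deconcat B (m (word u) (word v)) =
        ∑ s ∈ Finset.range (u.length + 1), ∑ t ∈ Finset.range (v.length + 1),
          B (m (word (u.take s)) (word (v.take t))) (m (word (u.drop s)) (word (v.drop t)))
  | [], v, B => by simp [hm.nil_left, deconcat_word]
  | a :: u, [], B => by simp [hm.nil_right, deconcat_word]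
  | a :: u, b :: v, B => by
    rw [hm.cons_cons, map_add, map_add, deconcat_consL, deconcat_consL, deconcat_prepend,
      deconcat_shuffle hm u (b :: v), deconcat_shuffle hm (a :: u) v,
      deconcat_shuffle hm u v]
    simp only [List.length_cons, Finset.sum_range_succ', List.take_succ_cons,
      List.drop_succ_cons, List.take_zero, List.drop_zero, hm.nil_left, hm.nil_right,
      consL_word, LinearMap.comp_apply, hm.cons_cons, map_add, LinearMap.add_apply,
      Finset.sum_add_distrib]
    abel
termination_by u v => u.length + v.length

end IsPhiShuffle

section ListSums

variable {α β M : Type*} [AddCommMonoid M]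

lemma List.sum_map_flatMap (L : List α) (g : α → List β) (f : β → M) :
    ((L.flatMap g).map f).sum = (L.map fun x => ((g x).map f).sum).sum := by
  simp [List.flatMap, List.sum_flatten, List.map_flatten, Function.comp_def]

lemma List.sum_map_ite_eq_sum_filter (l : List α) (q : α → Prop) [DecidablePred q]
    (f : α → M) :
    (l.map fun x => if q x then f x else 0).sum = ((l.filter fun x => q x).map f).sum := by
  induction l with
  | nil => simp
  | cons x l ih => by_cases h : q x <;> simp [h, ih]

lemma List.sum_map_eq_sum_range_filter (l : List α) (f : α → M) (key : α → ℕ) (N : ℕ)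
    (h : ∀ x ∈ l, key x < N) :
    (l.map f).sum = ∑ k ∈ Finset.range N, ((l.filter fun x => key x = k).map f).sum := by
  induction l with
  | nil => simp
  | cons x l ih =>
    have hx : key x < N := h x (by simp)
    have hsplit : ∀ k, (((x :: l).filter fun y => key y = k).map f).sum
        = (if key x = k then f x else 0) + ((l.filter fun y => key y = k).map f).sum := by
      intro k
      by_cases hk : key x = k <;> simp [hk]
    rw [List.map_cons, List.sum_cons, ih fun y hy => h y (by simp [hy]),
      Finset.sum_congr rfl fun k _ => hsplit k, Finset.sum_add_distrib]
    simp [Finset.sum_ite_eq, hx]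

end ListSums

section Cuts

variable {Y : Type*}

def cutStep (a : Y) : List (List Y) → List (List (List Y))
  | [] => [[[a]]]
  | p :: ps => [[a] :: p :: ps, (a :: p) :: ps]

lemma cuts_cons (a : Y) (w : List Y) : cuts (a :: w) = (cuts w).flatMap (cutStep a) := by
  simp only [cuts]; rfl

lemma length_le_of_mem_cuts : ∀ {w : List Y} {P : List (List Y)}, P ∈ cuts w →
    P.length ≤ w.length
  | [], P, hP => by simp [cuts] at hP; simp [hP]
  | a :: w, P, hP => by
    rw [cuts_cons, List.mem_flatMap] at hP
    obtain ⟨Q, hQ, hP⟩ := hP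
    have := length_le_of_mem_cuts hQ
    rcases Q with _ | ⟨p, ps⟩
    · simp_all [cutStep]
    · simp only [cutStep, List.mem_cons, List.not_mem_nil, or_false] at hP
      rcases hP with rfl | rfl <;> simp only [List.length_cons] at this ⊢ <;> omega

lemma length_pos_of_mem_cuts_cons {a : Y} {w : List Y} {P : List (List Y)}
    (hP : P ∈ cuts (a :: w)) : 0 < P.length := by
  rw [cuts_cons, List.mem_flatMap] at hP
  obtain ⟨Q, -, hP⟩ := hP
  rcases Q with _ | ⟨p, ps⟩
  · simp_all [cutStep]
  · simp only [cutStep, List.mem_cons, List.not_mem_nil, or_false] at hP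
    rcases hP with rfl | rfl <;> simp

end Cuts

section CutShuffle

variable {K : Type*} [CommRing K] {Y : Type*}
variable {φ : Y → Y → (Y →₀ K)} {m : (List Y →₀ K) →ₗ[K] (List Y →₀ K) →ₗ[K] (List Y →₀ K)}

/-- `(id - ε)^{⋆k} w = ∑_{w = u₁⋯u_k, uᵢ ≠ 1} u₁ ⧢ ⋯ ⧢ u_k`. -/
def cutShuffle (m : (List Y →₀ K) →ₗ[K] (List Y →₀ K) →ₗ[K] (List Y →₀ K)) (k : ℕ)
    (w : List Y) : List Y →₀ K :=
  (((cuts w).filter fun P => P.length = k).map fun P => prodM m (P.map word)).sum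

lemma cutShuffle_zero (w : List Y) : cutShuffle m 0 w = if w = [] then word [] else 0 := by
  cases w with
  | nil => simp [cutShuffle, cuts, prodM]
  | cons a w =>
    have : (cuts (a :: w)).filter (fun P => P.length = 0) = [] :=
      List.filter_eq_nil_iff.mpr fun P hP => by
        simpa using (length_pos_of_mem_cuts_cons hP).ne'
    simp only [cutShuffle, this, List.map_nil, List.sum_nil, reduceCtorEq, if_false]

lemma sum_cuts_first_block (k : ℕ) : ∀ (w : List Y) (g : List Y → List Y →₀ K),
    (((cuts w).filter fun P => P.length = k + 1).map
        fun P => m (g P.headI) (prodM m (P.tail.map word))).sum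
      = ∑ s ∈ Finset.range w.length, m (g (w.take (s + 1))) (cutShuffle m k (w.drop (s + 1)))
  | [], g => by simp [cuts]
  | a :: w, g => by
    rw [cuts_cons, List.filter_flatMap, List.sum_map_flatMap]
    have step : ∀ Q ∈ cuts w,
        (((cutStep a Q).filter fun P => P.length = k + 1).map
            fun P => m (g P.headI) (prodM m (P.tail.map word))).sum
          = (if Q.length = k then m (g [a]) (prodM m (Q.map word)) else 0)
            + (if Q.length = k + 1 then m (g (a :: Q.headI)) (prodM m (Q.tail.map word))
               else 0) := by
      intro Q _
      rcases Q with _ | ⟨p, ps⟩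
      · by_cases hk : k = 0
        · simp [cutStep, prodM, hk]
        · simp [cutStep, Ne.symm hk, hk]
      · by_cases h1 : ps.length + 1 = k <;> by_cases h2 : ps.length = k
        · omega
        all_goals simp [cutStep, h1, h2]
    have first : (((cuts w).filter fun Q => Q.length = k).map
          fun Q => m (g [a]) (prodM m (Q.map word))).sum = m (g [a]) (cutShuffle m k w) := by
      rw [cutShuffle, map_list_sum, List.map_map]; rfl
    rw [List.map_congr_left step, List.sum_map_add, List.sum_map_ite_eq_sum_filter,
      List.sum_map_ite_eq_sum_filter, first, sum_cuts_first_block k w fun l => g (a :: l),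
      List.length_cons, Finset.sum_range_succ']
    simp only [List.take_succ_cons, List.drop_succ_cons, List.take_zero, List.drop_zero]
    abel

lemma cutShuffle_succ (k : ℕ) (w : List Y) :
    cutShuffle m (k + 1) w =
      ∑ s ∈ Finset.range w.length, m (word (w.take (s + 1))) (cutShuffle m k (w.drop (s + 1))) := by
  rw [← sum_cuts_first_block k w word, cutShuffle]
  congr 1
  refine List.map_congr_left fun P hP => ?_
  rcases P with _ | ⟨p, ps⟩
  · simp at hP
  · simp [prodM]

lemma cutShuffle_eq_zero_of_length_lt : ∀ {k : ℕ} {w : List Y}, w.length < k →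
    cutShuffle m k w = 0
  | k + 1, w, h => by
    rw [cutShuffle_succ]
    refine Finset.sum_eq_zero fun s hs => ?_
    rw [cutShuffle_eq_zero_of_length_lt (by simp at hs ⊢; omega), map_zero]

lemma cutShuffle_one (hm : IsPhiShuffle φ m) {w : List Y} (hw : w ≠ []) :
    cutShuffle m 1 w = word w := by
  rw [cutShuffle_succ, Finset.sum_eq_single (w.length - 1)]
  · have : w.length - 1 + 1 = w.length := Nat.sub_add_cancel (List.length_pos_iff.mpr hw)
    simp [this, cutShuffle_zero, hm.nil_right]
  · intro s hs hne
    have : w.drop (s + 1) ≠ [] := by simp at hs ⊢; omega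
    simp [cutShuffle_zero, this]
  · simp [List.length_pos_iff.mpr hw]

lemma cutShuffle_succ_apply_nil (hm : IsPhiShuffle φ m) (k : ℕ) (w : List Y) :
    cutShuffle m (k + 1) w [] = 0 := by
  rw [cutShuffle_succ, Finset.sum_apply']
  refine Finset.sum_eq_zero fun s hs => ?_
  obtain ⟨a, w, rfl⟩ := List.exists_cons_of_ne_nil (List.ne_nil_of_length_pos
    (Nat.zero_lt_of_lt (Finset.mem_range.mp hs)))
  rw [List.take_succ_cons, hm.cons_apply_nil]

end CutShuffle

section XYCoeffs

lemma Finsupp.mapDomain_add_right_apply {α R : Type*} [AddCommMonoid α] [PartialOrder α]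
    [CanonicallyOrderedAdd α] [Sub α] [OrderedSub α] [IsRightCancelAdd α] [DecidableLE α]
    [AddCommMonoid R] (c : α →₀ R) (d p : α) :
    c.mapDomain (· + d) p = if d ≤ p then c (p - d) else 0 := by
  split_ifs with h
  · rw [← Finsupp.mapDomain_apply (add_left_injective d) c (p - d), tsub_add_cancel_of_le h]
  · exact Finsupp.mapDomain_of_notMem_range _ _ fun ⟨q, hq⟩ => h (hq ▸ le_add_self)

variable (R : Type*) [Semiring R]

/-- Multiplication by `x + y + xy` on coefficient arrays of polynomials in `x` and `y`. -/
def mulXYAdd (c : ℕ × ℕ →₀ R) : ℕ × ℕ →₀ R :=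
  c.mapDomain (· + (1, 0)) + c.mapDomain (· + (0, 1)) + c.mapDomain (· + (1, 1))

/-- The coefficients of `(x + y + xy) ^ k`. -/
def xyCoeffs : ℕ → ℕ × ℕ →₀ R
  | 0 => Finsupp.single (0, 0) 1
  | k + 1 => mulXYAdd R (xyCoeffs k)

variable {R}

lemma xyCoeffs_zero_apply (i j : ℕ) : xyCoeffs R 0 (i, j) = if i = 0 ∧ j = 0 then 1 else 0 := by
  simp [xyCoeffs, Finsupp.single_apply, eq_comm]

lemma xyCoeffs_succ_zero_zero (k : ℕ) : xyCoeffs R (k + 1) (0, 0) = 0 := by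
  simp [xyCoeffs, mulXYAdd, Finsupp.mapDomain_add_right_apply]

lemma xyCoeffs_succ_zero_succ (k j : ℕ) : xyCoeffs R (k + 1) (0, j + 1) = xyCoeffs R k (0, j) := by
  simp [xyCoeffs, mulXYAdd, Finsupp.mapDomain_add_right_apply]

lemma xyCoeffs_succ_succ_zero (k i : ℕ) : xyCoeffs R (k + 1) (i + 1, 0) = xyCoeffs R k (i, 0) := by
  simp [xyCoeffs, mulXYAdd, Finsupp.mapDomain_add_right_apply]

lemma xyCoeffs_succ_succ_succ (k i j : ℕ) :
    xyCoeffs R (k + 1) (i + 1, j + 1) =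
      xyCoeffs R k (i, j + 1) + xyCoeffs R k (i + 1, j) + xyCoeffs R k (i, j) := by
  simp [xyCoeffs, mulXYAdd, Finsupp.mapDomain_add_right_apply]

lemma map_xyCoeffs {S : Type*} [Semiring S] (f : R →+* S) :
    ∀ (k i j : ℕ), f (xyCoeffs R k (i, j)) = xyCoeffs S k (i, j)
  | 0, i, j => by simp only [xyCoeffs_zero_apply]; split_ifs <;> simp
  | k + 1, 0, 0 => by simp only [xyCoeffs_succ_zero_zero, map_zero]
  | k + 1, 0, j + 1 => by simp only [xyCoeffs_succ_zero_succ, map_xyCoeffs f k]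
  | k + 1, i + 1, 0 => by simp only [xyCoeffs_succ_succ_zero, map_xyCoeffs f k]
  | k + 1, i + 1, j + 1 => by simp only [xyCoeffs_succ_succ_succ, map_add, map_xyCoeffs f k]

lemma xyCoeffs_zero_succ_left (i j : ℕ) : xyCoeffs R 0 (i + 1, j) = 0 := by
  simp [xyCoeffs_zero_apply]

lemma xyCoeffs_zero_left : ∀ k j : ℕ, xyCoeffs R k (0, j) = if k = j then 1 else 0
  | 0, j => by simp [xyCoeffs_zero_apply, eq_comm]
  | k + 1, 0 => by simp [xyCoeffs_succ_zero_zero]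
  | k + 1, j + 1 => by simp [xyCoeffs_succ_zero_succ, xyCoeffs_zero_left k j]

lemma xyCoeffs_zero_right : ∀ k i : ℕ, xyCoeffs R k (i, 0) = if k = i then 1 else 0
  | 0, i => by simp [xyCoeffs_zero_apply, eq_comm]
  | k + 1, 0 => by simp [xyCoeffs_succ_zero_zero]
  | k + 1, i + 1 => by simp [xyCoeffs_succ_succ_zero, xyCoeffs_zero_right k i]

lemma xyCoeffs_swap : ∀ k i j : ℕ, xyCoeffs R k (i, j) = xyCoeffs R k (j, i)
  | 0, i, j => by simp [xyCoeffs_zero_apply, and_comm]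
  | k + 1, 0, j => by rw [xyCoeffs_zero_left, xyCoeffs_zero_right]
  | k + 1, i + 1, 0 => by rw [xyCoeffs_zero_left, xyCoeffs_zero_right]
  | k + 1, i + 1, j + 1 => by
    rw [xyCoeffs_succ_succ_succ, xyCoeffs_succ_succ_succ, xyCoeffs_swap k i (j + 1),
      xyCoeffs_swap k (i + 1) j, xyCoeffs_swap k i j, add_comm (xyCoeffs R k (j + 1, i))]

end XYCoeffs

lemma xyCoeffs_one_left {R : Type*} [CommSemiring R] : ∀ k j : ℕ,
    xyCoeffs R k (1, j) = if k = j ∨ k = j + 1 then (k : R) else 0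
  | 0, j => by simp [xyCoeffs_zero_apply]
  | k + 1, 0 => by rw [xyCoeffs_succ_succ_zero, xyCoeffs_zero_right]; split_ifs <;> simp_all
  | k + 1, j + 1 => by
    rw [xyCoeffs_succ_succ_succ, xyCoeffs_one_left k j, xyCoeffs_zero_left, xyCoeffs_zero_left]
    split_ifs <;> push_cast <;> first | ring1 | (exfalso; omega)

section XYCoeffsRing

variable {R : Type*} [CommRing R]

lemma succ_mul_xyCoeffs_succ_left : ∀ k i j : ℕ,
    ((i : R) + 1) * xyCoeffs R k (i + 1, j) =
      ((k : R) - i) * (xyCoeffs R k (i, j + 1) + xyCoeffs R k (i, j))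
  | 0, 0, j => by simp [xyCoeffs_zero_apply]
  | 0, i + 1, j => by simp only [xyCoeffs_zero_succ_left]; ring
  | k + 1, 0, j => by
    rw [xyCoeffs_one_left, xyCoeffs_zero_left, xyCoeffs_zero_left]
    split_ifs <;> push_cast <;> first | ring1 | (exfalso; omega)
  | k + 1, i + 1, 0 => by
    rw [xyCoeffs_zero_right, xyCoeffs_swap, xyCoeffs_one_left, xyCoeffs_zero_right]
    obtain h | rfl | rfl : (k ≠ i ∧ k ≠ i + 1) ∨ k = i ∨ k = i + 1 := by omega
    · simp [h.1, h.2]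
    · simp
    · simp
  | k + 1, i + 1, j + 1 => by
    have h₁ := succ_mul_xyCoeffs_succ_left k i (j + 1)
    have h₂ := succ_mul_xyCoeffs_succ_left k (i + 1) j
    have h₃ := succ_mul_xyCoeffs_succ_left k i j
    simp only [xyCoeffs_succ_succ_succ]
    push_cast at h₁ h₂ h₃ ⊢
    linear_combination h₁ + h₂ + h₃

lemma succ_mul_xyCoeffs_succ_succ (k i j : ℕ) :
    ((i : R) + 1) * xyCoeffs R (k + 1) (i + 1, j + 1) =
      ((k : R) + 1) * (xyCoeffs R k (i, j + 1) + xyCoeffs R k (i, j)) := by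
  rw [xyCoeffs_succ_succ_succ]
  linear_combination succ_mul_xyCoeffs_succ_left (R := R) k i j

/-- `1 / (1 + x + y + xy) = 1 / (1 + x) · 1 / (1 + y)`, up to degree `M`. -/
lemma sum_neg_one_pow_mul_xyCoeffs : ∀ p q M : ℕ, p + q ≤ M →
    ∑ k ∈ Finset.range (M + 1), (-1 : R) ^ k * xyCoeffs R k (p, q) = (-1) ^ (p + q)
  | 0, q, M, h => by
    simp [xyCoeffs_zero_left, Finset.sum_ite_eq', Nat.not_lt.mpr (Nat.zero_add q ▸ h)]
  | p + 1, 0, M, h => by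
    simp [xyCoeffs_zero_right, Finset.sum_ite_eq', Nat.not_le.mpr (Nat.lt_of_succ_le h)]
  | p + 1, q + 1, 0, h => by omega
  | p + 1, q + 1, M + 1, h => by
    have h₁ := sum_neg_one_pow_mul_xyCoeffs p (q + 1) M (by omega)
    have h₂ := sum_neg_one_pow_mul_xyCoeffs (p + 1) q M (by omega)
    have h₃ := sum_neg_one_pow_mul_xyCoeffs p q M (by omega)
    rw [Finset.sum_range_succ']
    simp only [xyCoeffs_succ_succ_succ, xyCoeffs_zero_succ_left, mul_zero, add_zero, pow_succ,
      mul_add, Finset.sum_add_distrib, mul_neg_one, neg_mul, Finset.sum_neg_distrib, h₁, h₂, h₃]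
    ring

end XYCoeffsRing

/-- The coefficient of `t ^ k` in `log (1 + t)`; the junk value at `k = 0` is `0`. -/
def logCoeff (k : ℕ) : ℚ := (-1) ^ (k - 1) / k

lemma succ_mul_logCoeff_succ (k : ℕ) : ((k : ℚ) + 1) * logCoeff (k + 1) = (-1) ^ k := by
  rw [logCoeff, Nat.add_sub_cancel, Nat.cast_succ, mul_div_cancel₀ _ (by positivity)]

/-- `log (1 + x + y + xy) = log (1 + x) + log (1 + y)` has no mixed monomials. -/
lemma sum_logCoeff_mul_xyCoeffs {i j N : ℕ} (hi : 1 ≤ i) (hj : 1 ≤ j) (hN : i + j ≤ N) :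
    ∑ k ∈ Finset.range (N + 1), logCoeff k * xyCoeffs ℚ k (i, j) = 0 := by
  obtain ⟨i, rfl⟩ := Nat.exists_eq_add_of_le' hi
  obtain ⟨j, rfl⟩ := Nat.exists_eq_add_of_le' hj
  obtain ⟨N, rfl⟩ : ∃ N', N = N' + 1 := ⟨N - 1, by omega⟩
  have hterm : ∀ k, ((i : ℚ) + 1) * (logCoeff (k + 1) * xyCoeffs ℚ (k + 1) (i + 1, j + 1)) =
      (-1) ^ k * xyCoeffs ℚ k (i, j + 1) + (-1) ^ k * xyCoeffs ℚ k (i, j) := fun k => by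
    rw [mul_left_comm, succ_mul_xyCoeffs_succ_succ, ← mul_assoc, mul_comm (logCoeff _),
      succ_mul_logCoeff_succ, mul_add]
  have : ((i : ℚ) + 1) * ∑ k ∈ Finset.range (N + 1 + 1), logCoeff k * xyCoeffs ℚ k (i + 1, j + 1)
      = 0 := by
    rw [Finset.mul_sum, Finset.sum_range_succ', Finset.sum_congr rfl fun k _ => hterm k,
      Finset.sum_add_distrib, sum_neg_one_pow_mul_xyCoeffs i (j + 1) N (by omega),
      sum_neg_one_pow_mul_xyCoeffs i j N (by omega), xyCoeffs_zero_succ_left]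
    ring
  exact (mul_eq_zero.mp this).resolve_left (by positivity)

section CutShuffleL

variable {K : Type*} [CommRing K] {Y : Type*}
variable {φ : Y → Y → (Y →₀ K)} {m : (List Y →₀ K) →ₗ[K] (List Y →₀ K) →ₗ[K] (List Y →₀ K)}

def cutShuffleL (m : (List Y →₀ K) →ₗ[K] (List Y →₀ K) →ₗ[K] (List Y →₀ K)) (k : ℕ) :
    (List Y →₀ K) →ₗ[K] (List Y →₀ K) :=
  Finsupp.linearCombination K (cutShuffle m k)

lemma cutShuffleL_word (k : ℕ) (w : List Y) : cutShuffleL m k (word w) = cutShuffle m k w := by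
  simp [cutShuffleL, word]

lemma cutShuffleL_zero_apply (p : List Y →₀ K) : cutShuffleL m 0 p = p [] • word [] := by
  induction p using Finsupp.induction_linear with
  | zero => simp
  | add f g hf hg => simp [hf, hg, add_smul]
  | single w k =>
    rw [single_eq_smul_word, map_smul, cutShuffleL_word, cutShuffle_zero]
    by_cases h : w = [] <;> simp [h, word, Ne.symm]

lemma deconcat_cutShuffleL_word (hm : IsPhiShuffle φ m) (k : ℕ) (w : List Y) :
    deconcat (m.compl₂ (cutShuffleL m k)) (word w) = cutShuffle m k w + cutShuffle m (k + 1) w := by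
  rw [deconcat_word, Finset.sum_range_succ', cutShuffle_succ]
  simp [cutShuffleL_word, hm.nil_left, add_comm]

lemma cutShuffleL_succ_apply (hm : IsPhiShuffle φ m) (k : ℕ) (p : List Y →₀ K) :
    cutShuffleL m (k + 1) p = deconcat (m.compl₂ (cutShuffleL m k)) p - cutShuffleL m k p := by
  induction p using Finsupp.induction_linear with
  | zero => simp
  | add f g hf hg => simp only [map_add, hf, hg]; abel
  | single w c =>
    simp only [single_eq_smul_word, map_smul, ← smul_sub, deconcat_cutShuffleL_word hm,
      cutShuffleL_word, add_sub_cancel_left]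

def shuffleCombination (m : (List Y →₀ K) →ₗ[K] (List Y →₀ K) →ₗ[K] (List Y →₀ K))
    (u v : List Y) : (ℕ × ℕ →₀ K) →ₗ[K] (List Y →₀ K) :=
  Finsupp.linearCombination K fun p => m (cutShuffle m p.1 u) (cutShuffle m p.2 v)

/-- Deconcatenating both arguments multiplies the coefficients by `(1 + x)(1 + y)`. -/
lemma sum_shuffle_shuffleCombination (hm : IsPhiShuffle φ m) (hassoc : PhiAssoc φ)
    (hcomm : PhiComm φ) (u v : List Y) (c : ℕ × ℕ →₀ K) :
    ∑ s ∈ Finset.range (u.length + 1), ∑ t ∈ Finset.range (v.length + 1),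
        m (m (word (u.take s)) (word (v.take t))) (shuffleCombination m (u.drop s) (v.drop t) c)
      = shuffleCombination m u v (c + mulXYAdd K c) := by
  induction c using Finsupp.induction_linear with
  | zero => simp [mulXYAdd]
  | add f g hf hg =>
    simp only [mulXYAdd, Finsupp.mapDomain_add, map_add, Finset.sum_add_distrib] at hf hg ⊢
    rw [hf, hg]; abel
  | single p r =>
    have deconcat_sum : ∀ (i : ℕ) (w : List Y), ∑ s ∈ Finset.range (w.length + 1),
        m (word (w.take s)) (cutShuffle m i (w.drop s)) =
          cutShuffle m i w + cutShuffle m (i + 1) w :=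
      fun i w => by rw [← deconcat_cutShuffleL_word hm, deconcat_word]; simp [cutShuffleL_word]
    simp only [shuffleCombination, mulXYAdd, Finsupp.mapDomain_single,
      Finsupp.linearCombination_single, map_smul, hm.mul_mul_mul_comm hassoc hcomm,
      ← Finset.smul_sum, ← map_sum, ← LinearMap.sum_apply, deconcat_sum]
    simp only [map_add, LinearMap.add_apply, smul_add, Finsupp.linearCombination_single,
      Prod.fst_add, Prod.snd_add, add_zero]
    abel

lemma cutShuffleL_shuffle (hm : IsPhiShuffle φ m) (hassoc : PhiAssoc φ) (hcomm : PhiComm φ) :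
    ∀ (k : ℕ) (u v : List Y),
      cutShuffleL m k (m (word u) (word v)) = shuffleCombination m u v (xyCoeffs K k)
  | 0, u, v => by
    simp only [cutShuffleL_zero_apply, shuffleCombination, xyCoeffs,
      Finsupp.linearCombination_single, one_smul, cutShuffle_zero]
    rcases u with _ | ⟨a, u⟩
    · rw [hm.nil_left]
      by_cases hv : v = []
      · simp only [hv, if_true, hm.nil_left]; simp [word]
      · simp [hv, word, Ne.symm]
    · simp [hm.cons_apply_nil]
  | k + 1, u, v => by
    simp only [cutShuffleL_succ_apply hm, hm.deconcat_shuffle, LinearMap.compl₂_apply,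
      cutShuffleL_shuffle hm hassoc hcomm k, sum_shuffle_shuffleCombination hm hassoc hcomm,
      map_add, add_sub_cancel_left]
    rfl

end CutShuffleL

section Eulerian

variable {K : Type*} [CommRing K] [Algebra ℚ K] {Y : Type*}
variable {φ : Y → Y → (Y →₀ K)} {m : (List Y →₀ K) →ₗ[K] (List Y →₀ K) →ₗ[K] (List Y →₀ K)}

/-- The convolution logarithm `π̌` of the identity, truncated at degree `N`. -/
def eulerian (m : (List Y →₀ K) →ₗ[K] (List Y →₀ K) →ₗ[K] (List Y →₀ K)) (N : ℕ) :
    (List Y →₀ K) →ₗ[K] (List Y →₀ K) :=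
  ∑ k ∈ Finset.range (N + 1), algebraMap ℚ K (logCoeff k) • cutShuffleL m k

lemma eulerian_shuffle_eq_zero (hm : IsPhiShuffle φ m) (hassoc : PhiAssoc φ)
    (hcomm : PhiComm φ) {u v : List Y} (hu : u ≠ []) (hv : v ≠ []) {N : ℕ}
    (hN : u.length + v.length ≤ N) : eulerian m N (m (word u) (word v)) = 0 := by
  simp only [eulerian, LinearMap.sum_apply, LinearMap.smul_apply,
    cutShuffleL_shuffle hm hassoc hcomm]
  rw [Finset.sum_congr rfl fun k _ => (map_smul _ _ _).symm, ← map_sum, shuffleCombination,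
    Finsupp.linearCombination_apply]
  refine Finset.sum_eq_zero fun p _ => ?_
  obtain ⟨i, j⟩ := p
  by_cases hij : 1 ≤ i ∧ i ≤ u.length ∧ 1 ≤ j ∧ j ≤ v.length
  · obtain ⟨hi, hiu, hj, hjv⟩ := hij
    have hcoeff : ∑ k ∈ Finset.range (N + 1), algebraMap ℚ K (logCoeff k) * xyCoeffs K k (i, j)
        = 0 := by
      simp only [← map_xyCoeffs (algebraMap ℚ K), ← map_mul, ← map_sum,
        sum_logCoeff_mul_xyCoeffs (N := N) hi hj (by omega), map_zero]
    simp only [Finsupp.finsetSum_apply, Finsupp.smul_apply, smul_eq_mul, hcoeff, zero_smul]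
  · have : cutShuffle m i u = 0 ∨ cutShuffle m j v = 0 := by
      by_cases hi : i = 0
      · simp [hi, cutShuffle_zero, hu]
      by_cases hj : j = 0
      · simp [hj, cutShuffle_zero, hv]
      by_cases hiu : u.length < i
      · exact .inl (cutShuffle_eq_zero_of_length_lt hiu)
      · exact .inr (cutShuffle_eq_zero_of_length_lt (by omega))
    rcases this with h | h <;> simp [h]

lemma piOneS_apply_eq_pairPS_eulerian (S : List Y → K) {w : List Y} {N : ℕ}
    (hN : w.length ≤ N) : piOneS m S w = pairPS S (eulerian m N (word w)) := by
  rw [piOneS, List.sum_map_eq_sum_range_filter _ _ List.length (N + 1)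
    fun P hP => Nat.lt_succ_of_le ((length_le_of_mem_cuts hP).trans hN)]
  simp only [eulerian, LinearMap.sum_apply, LinearMap.smul_apply, map_sum, map_smul,
    cutShuffleL_word, pairPS_eq_linearCombination, cutShuffle, map_list_sum, List.map_map]
  refine Finset.sum_congr rfl fun k _ => ?_
  rw [smul_eq_mul, ← List.sum_map_mul_left]
  refine congrArg List.sum (List.map_congr_left fun P hP => ?_)
  have hlen : P.length = k := by simpa using List.of_mem_filter hP
  rw [hlen]
  rfl

lemma pairPS_piOneS (S : List Y → K) {p : List Y →₀ K} {N : ℕ}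
    (hN : ∀ w ∈ p.support, w.length ≤ N) :
    pairPS (piOneS m S) p = pairPS S (eulerian m N p) := by
  rw [pairPS_eq_linearCombination S]
  conv_rhs => rw [← Finsupp.sum_single p]
  rw [map_finsuppSum, map_finsuppSum, pairPS]
  refine Finset.sum_congr rfl fun w hw => ?_
  simp only [single_eq_smul_word, map_smul, piOneS_apply_eq_pairPS_eulerian S (hN w hw),
    pairPS_eq_linearCombination, smul_eq_mul]

end Eulerian

section Primitive

variable {K : Type*} [CommRing K] {Y : Type*}
variable {φ : Y → Y → (Y →₀ K)} {m : (List Y →₀ K) →ₗ[K] (List Y →₀ K) →ₗ[K] (List Y →₀ K)}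

lemma primS_of_pairPS_shuffle_eq_zero (hm : IsPhiShuffle φ m) {T : List Y → K} (h0 : T [] = 0)
    (h : ∀ u v : List Y, u ≠ [] → v ≠ [] → pairPS T (m (word u) (word v)) = 0) : PrimS m T := by
  intro u v
  rw [DeltaS, pairPS_eq_linearCombination]
  rcases u with _ | ⟨a, u⟩
  · rw [hm.nil_left]
    by_cases hv : v = [] <;> simp [word, hv, h0]
  rcases v with _ | ⟨b, v⟩
  · rw [hm.nil_right]
    simp [word]
  · simpa [← pairPS_eq_linearCombination] using h _ _ (List.cons_ne_nil a u) (List.cons_ne_nil b v)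

namespace PrimS

variable {S : List Y → K}

lemma apply_nil (hm : IsPhiShuffle φ m) (hS : PrimS m S) : S [] = 0 := by
  have := hS [] []
  rw [DeltaS, hm.nil_left, pairPS_eq_linearCombination] at this
  simpa [word] using this

lemma pairPS_cons_shuffle (hS : PrimS m S) (a : Y) (u : List Y)
    (q : List Y →₀ K) : pairPS S (m (word (a :: u)) q) = q [] * S (a :: u) := by
  rw [pairPS_eq_linearCombination]
  induction q using Finsupp.induction_linear with
  | zero => simp
  | add f g hf hg => rw [map_add, map_add, hf, hg, Finsupp.add_apply, add_mul]
  | single w c =>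
    have := hS (a :: u) w
    rw [DeltaS, pairPS_eq_linearCombination] at this
    rw [single_eq_smul_word, map_smul, map_smul, this]
    by_cases hw : w = [] <;> simp [hw, word, Ne.symm]

lemma pairPS_cutShuffle (hm : IsPhiShuffle φ m) (hS : PrimS m S) (k : ℕ) (w : List Y) :
    pairPS S (cutShuffle m (k + 2) w) = 0 := by
  rw [cutShuffle_succ, pairPS_eq_linearCombination, map_sum]
  refine Finset.sum_eq_zero fun s hs => ?_
  obtain ⟨a, w, rfl⟩ := List.exists_cons_of_ne_nil (List.ne_nil_of_length_pos
    (Nat.zero_lt_of_lt (Finset.mem_range.mp hs)))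
  rw [List.take_succ_cons, ← pairPS_eq_linearCombination, hS.pairPS_cons_shuffle,
    cutShuffle_succ_apply_nil hm, zero_mul]

end PrimS

end Primitive

section Projector

variable {K : Type*} [CommRing K] [Algebra ℚ K] {Y : Type*}
variable {φ : Y → Y → (Y →₀ K)} {m : (List Y →₀ K) →ₗ[K] (List Y →₀ K) →ₗ[K] (List Y →₀ K)}

lemma piOneS_apply_nil (S : List Y → K) : piOneS m S [] = 0 := by
  simp [piOneS, cuts]

lemma primS_piOneS (hm : IsPhiShuffle φ m) (hassoc : PhiAssoc φ) (hcomm : PhiComm φ)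
    (S : List Y → K) : PrimS m (piOneS m S) := by
  refine primS_of_pairPS_shuffle_eq_zero hm (piOneS_apply_nil S) fun u v hu hv => ?_
  set p := m (word u) (word v)
  have hp : ∀ w ∈ p.support, w.length ≤ p.support.sup List.length + (u.length + v.length) :=
    fun w hw => (Finset.le_sup (f := List.length) hw).trans (Nat.le_add_right _ _)
  rw [pairPS_piOneS S hp, eulerian_shuffle_eq_zero hm hassoc hcomm hu hv (Nat.le_add_left _ _),
    pairPS_eq_linearCombination, map_zero]

lemma piOneS_eq_self_of_primS (hm : IsPhiShuffle φ m) {S : List Y → K} (hS : PrimS m S) :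
    piOneS m S = S := by
  funext w
  rcases w with _ | ⟨a, w⟩
  · rw [piOneS_apply_nil, hS.apply_nil hm]
  rw [piOneS_apply_eq_pairPS_eulerian S le_rfl, eulerian, LinearMap.sum_apply,
    pairPS_eq_linearCombination, map_sum, Finset.sum_eq_single 1]
  · rw [LinearMap.smul_apply, cutShuffleL_word, cutShuffle_one hm (List.cons_ne_nil a w)]
    simp [logCoeff, word]
  · intro k _ hk
    rcases k with _ | _ | k
    · simp [cutShuffleL_word, cutShuffle_zero]
    · exact absurd rfl hk
    · rw [LinearMap.smul_apply, cutShuffleL_word, map_smul,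
        ← pairPS_eq_linearCombination, hS.pairPS_cutShuffle hm, smul_zero]
  · simp

end Projector

variable {K : Type*} [CommRing K] [Algebra ℚ K]
variable {Y : Type*} [DecidableEq Y]

theorem piOne_projector_onto_primitives_general (φ : Y → Y → (Y →₀ K))
    (m : (List Y →₀ K) →ₗ[K] (List Y →₀ K) →ₗ[K] (List Y →₀ K))
    (hm : IsPhiShuffle φ m) (hassoc : PhiAssoc φ) (hcomm : PhiComm φ) :
    (∀ S : List Y → K, piOneS m (piOneS m S) = piOneS m S) ∧
    (∀ S : List Y → K, PrimS m (piOneS m S)) ∧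
    (∀ S : List Y → K, PrimS m S → piOneS m S = S) :=
  ⟨fun S => piOneS_eq_self_of_primS hm (primS_piOneS hm hassoc hcomm S),
    primS_piOneS hm hassoc hcomm, fun _ => piOneS_eq_self_of_primS hm⟩

/-- the extended Eulerian operator `π₁` is a projector whose image
is exactly the space of primitive series. -/
theorem piOne_projector_onto_primitives (φ : Y → Y → (Y →₀ K))
    (m : (List Y →₀ K) →ₗ[K] (List Y →₀ K) →ₗ[K] (List Y →₀ K))
    (hm : IsPhiShuffle φ m) (hassoc : PhiAssoc φ) (hcomm : PhiComm φ)
    (hdual : PhiDualizable φ) :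
    (∀ S : List Y → K, piOneS m (piOneS m S) = piOneS m S) ∧
    (∀ S : List Y → K, PrimS m (piOneS m S)) ∧
    (∀ S : List Y → K, PrimS m S → piOneS m S = S) :=
  piOne_projector_onto_primitives_general φ m hm hassoc hcomm

end
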